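/- arXiv:2505.10471 — 6 statements merged into one kernel-verified Lean document; each statement's English description precedes it below -/
import Mathlib

section
/- Let p, q be integers with p ≥ 2 and q ≥ 2, and define f(i) = ⌊((i−1)(q−1))/(p−1)⌋ + 1 for 1 ≤ i ≤ p and g(j) = ⌈((j−1)(p−1))/(q−1)⌉ for 2 ≤ j ≤ q. Then the two families of pairs {(i, f(i)) : 1 ≤ i ≤ p} and {(g(j), j) : 2 ≤ j ≤ q} are disjoint, and consequently the (p,q)-broom edge set E' = {(i, f(i)) : 1 ≤ i ≤ p} ∪ {(g(j), j) : 2 ≤ j ≤ q} has cardinality exactly p + q − 1. -/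
/-- `f i = ⌊((i-1)(q-1))/(p-1)⌋ + 1`, floor taken over the rationals. -/
def broomF (p q i : ℤ) : ℤ := ⌊(((i : ℚ) - 1) * ((q : ℚ) - 1)) / ((p : ℚ) - 1)⌋ + 1

/-- `g j = ⌈((j-1)(p-1))/(q-1)⌉`, ceiling taken over the rationals. -/
def broomG (p q j : ℤ) : ℤ := ⌈(((j : ℚ) - 1) * ((p : ℚ) - 1)) / ((q : ℚ) - 1)⌉

lemma broom_disjoint (p q : ℤ) (hp : 2 ≤ p) (hq : 2 ≤ q) :
    Disjoint ((Finset.Icc 1 p).image (fun i => (i, broomF p q i)))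
      ((Finset.Icc 2 q).image (fun j => (broomG p q j, j))) := by
  rw [Finset.disjoint_left]
  rintro a ha hb
  simp only [Finset.mem_image, Finset.mem_Icc] at ha hb
  obtain ⟨i, hi, rfl⟩ := ha
  obtain ⟨j, hj, hEq⟩ := hb
  have h1 : broomG p q j = i := (Prod.mk.injEq _ _ _ _).mp hEq |>.1
  have h2 : j = broomF p q i := (Prod.mk.injEq _ _ _ _).mp hEq |>.2
  have hpQ : (0 : ℚ) < (p : ℚ) - 1 := by
    have : (1 : ℚ) < (p : ℚ) := by exact_mod_cast (by omega : (1:ℤ) < p)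
    linarith
  have hqQ : (0 : ℚ) < (q : ℚ) - 1 := by
    have : (1 : ℚ) < (q : ℚ) := by exact_mod_cast (by omega : (1:ℤ) < q)
    linarith
  -- from h2 : floor = j - 1, so (j-1 : ℚ) ≤ x
  have hfloor : ⌊(((i : ℚ) - 1) * ((q : ℚ) - 1)) / ((p : ℚ) - 1)⌋ = j - 1 := by
    unfold broomF at h2; omega
  have hx : ((j : ℚ) - 1) ≤ (((i : ℚ) - 1) * ((q : ℚ) - 1)) / ((p : ℚ) - 1) := by
    have := Int.floor_le ((((i : ℚ) - 1) * ((q : ℚ) - 1)) / ((p : ℚ) - 1))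
    rw [hfloor] at this
    push_cast at this
    linarith
  have hA : ((j : ℚ) - 1) * ((p : ℚ) - 1) ≤ ((i : ℚ) - 1) * ((q : ℚ) - 1) := by
    rw [← le_div_iff₀ hpQ]; exact hx
  -- from h1 : ceil = i, so i - 1 < y
  have hy : ((i : ℚ) - 1) < (((j : ℚ) - 1) * ((p : ℚ) - 1)) / ((q : ℚ) - 1) := by
    have := Int.sub_one_lt_floor ((((j : ℚ) - 1) * ((p : ℚ) - 1)) / ((q : ℚ) - 1))
    have hc := Int.ceil_le.mpr (le_refl ((⌈(((j : ℚ) - 1) * ((p : ℚ) - 1)) / ((q : ℚ) - 1)⌉ : ℚ)))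
    -- simpler: x > ⌈x⌉ - 1
    have h' := Int.ceil_lt_add_one ((((j : ℚ) - 1) * ((p : ℚ) - 1)) / ((q : ℚ) - 1))
    rw [broomG] at h1
    calc ((i : ℚ) - 1) = ((⌈(((j : ℚ) - 1) * ((p : ℚ) - 1)) / ((q : ℚ) - 1)⌉ : ℤ) : ℚ) - 1 := by
          rw [h1]
      _ < (((j : ℚ) - 1) * ((p : ℚ) - 1)) / ((q : ℚ) - 1) := by
          have := Int.ceil_lt_add_one ((((j : ℚ) - 1) * ((p : ℚ) - 1)) / ((q : ℚ) - 1))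
          linarith
  have hB : ((i : ℚ) - 1) * ((q : ℚ) - 1) < ((j : ℚ) - 1) * ((p : ℚ) - 1) := by
    rw [← lt_div_iff₀ hqQ] at *
    exact hy
  linarith

/-- the two families of pairs `{(i, f i) : 1 ≤ i ≤ p}` and
`{(g j, j) : 2 ≤ j ≤ q}` are disjoint, and the broom edge set (their union)
has exactly `p + q - 1` elements. -/
theorem broom_edge_card (p q : ℤ) (hp : 2 ≤ p) (hq : 2 ≤ q) :
    Disjoint ((Finset.Icc 1 p).image (fun i => (i, broomF p q i)))
      ((Finset.Icc 2 q).image (fun j => (broomG p q j, j))) ∧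
    ((((Finset.Icc 1 p).image (fun i => (i, broomF p q i))) ∪
      ((Finset.Icc 2 q).image (fun j => (broomG p q j, j)))).card : ℤ) = p + q - 1 := by
  have hd := broom_disjoint p q hp hq
  refine ⟨hd, ?_⟩
  rw [Finset.card_union_of_disjoint hd]
  rw [Finset.card_image_of_injective _ (fun a b h => (Prod.mk.injEq _ _ _ _).mp h |>.1),
      Finset.card_image_of_injective _ (fun a b h => (Prod.mk.injEq _ _ _ _).mp h |>.2)]
  rw [Int.card_Icc, Int.card_Icc]
  push_cast
  omega
end

section
/- Let p, q be integers with p ≥ 2 and q ≥ 2, and let G be the simple graph on the vertex type Fin p ⊕ Fin q in which u_i (the i-th left vertex) is adjacent to v_j (the j-th right vertex) if and only if the pair (i, j) belongs to the (p,q)-broom edge set E', and no two left vertices and no two right vertices are adjacent. Then G is connected. -/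
/-- `(i, j)` is an edge of the `(p,q)`-broom (1-based indices). -/
def broomEdge (p q i j : ℤ) : Prop :=
  (1 ≤ i ∧ i ≤ p ∧ j = broomF p q i) ∨ (2 ≤ j ∧ j ≤ q ∧ i = broomG p q j)

/-- The `(p,q)`-broom as a simple graph on `Fin p ⊕ Fin q`: the `i`-th left vertex is
adjacent to the `j`-th right vertex iff `(i, j)` (1-based) is a broom edge, and no two
vertices on the same side are adjacent. -/
def broomGraph (p q : ℕ) : SimpleGraph (Fin p ⊕ Fin q) where
  Adj x y :=
    ∃ (i : Fin p) (j : Fin q),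
      ((x = Sum.inl i ∧ y = Sum.inr j) ∨ (x = Sum.inr j ∧ y = Sum.inl i)) ∧
      broomEdge (p : ℤ) (q : ℤ) ((i : ℤ) + 1) ((j : ℤ) + 1)
  symm := by
    constructor
    rintro x y ⟨i, j, (⟨h1, h2⟩ | ⟨h1, h2⟩), he⟩
    · exact ⟨i, j, Or.inr ⟨h2, h1⟩, he⟩
    · exact ⟨i, j, Or.inl ⟨h2, h1⟩, he⟩
  loopless := by
    constructor
    rintro x ⟨i, j, (⟨h1, h2⟩ | ⟨h1, h2⟩), -⟩ <;> subst h1 <;> simp at h2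

/-! Root the graph at `v₁`. Every left vertex `uᵢ` is joined to `v_{f(i)}`; either `f(i) = 1`,
or `v_{f(i)}` is joined to `u_{g(f(i))}`, and `g(f(i)) ≤ i - 1` because `⌊x⌋ ≤ x`. Strong
induction on `i` therefore reaches every left vertex from `v₁`, and every other right vertex
`v_j` hangs off `u_{g(j)}`. -/

section BroomIndices

variable {P Q i j : ℤ}

theorem one_le_broomF (hP : 1 ≤ P) (hQ : 1 ≤ Q) (hi : 1 ≤ i) : 1 ≤ broomF P Q i := by
  have hP' : (1 : ℚ) ≤ P := by exact_mod_cast hP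
  have hQ' : (1 : ℚ) ≤ Q := by exact_mod_cast hQ
  have hi' : (1 : ℚ) ≤ i := by exact_mod_cast hi
  have hx : (0 : ℚ) ≤ ((i - 1) * (Q - 1)) / (P - 1) := by
    apply div_nonneg <;> nlinarith
  have := Int.floor_nonneg.2 hx
  unfold broomF
  omega

theorem broomF_le (hP : 1 < P) (hQ : 1 ≤ Q) (hi : i ≤ P) : broomF P Q i ≤ Q := by
  have hP' : (1 : ℚ) < P := by exact_mod_cast hP
  have hQ' : (1 : ℚ) ≤ Q := by exact_mod_cast hQ
  have hi' : (i : ℚ) ≤ P := by exact_mod_cast hi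
  have hx : ((i - 1) * (Q - 1)) / (P - 1) < ((Q - 1 : ℤ) : ℚ) + 1 := by
    rw [div_lt_iff₀ (by linarith)]
    push_cast
    nlinarith
  have := Int.floor_lt.2 (lt_of_lt_of_eq hx (by push_cast; ring))
  unfold broomF
  omega

theorem one_le_broomG (hP : 1 < P) (hQ : 1 < Q) (hj : 1 < j) : 1 ≤ broomG P Q j := by
  have hP' : (1 : ℚ) < P := by exact_mod_cast hP
  have hQ' : (1 : ℚ) < Q := by exact_mod_cast hQ
  have hj' : (1 : ℚ) < j := by exact_mod_cast hj
  have hy : (0 : ℚ) < ((j - 1) * (P - 1)) / (Q - 1) := by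
    apply div_pos <;> nlinarith
  exact Int.ceil_pos.2 hy

theorem broomG_le (hP : 1 ≤ P) (hQ : 1 < Q) (hj : j ≤ Q) : broomG P Q j ≤ P := by
  have hP' : (1 : ℚ) ≤ P := by exact_mod_cast hP
  have hQ' : (1 : ℚ) < Q := by exact_mod_cast hQ
  have hj' : (j : ℚ) ≤ Q := by exact_mod_cast hj
  refine Int.ceil_le.2 ?_
  rw [div_le_iff₀ (by linarith)]
  nlinarith

theorem broomG_broomF_le (hP : 1 < P) (hQ : 1 < Q) : broomG P Q (broomF P Q i) ≤ i - 1 := by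
  have hP' : (0 : ℚ) < P - 1 := by linarith [(by exact_mod_cast hP : (1 : ℚ) < P)]
  have hQ' : (0 : ℚ) < Q - 1 := by linarith [(by exact_mod_cast hQ : (1 : ℚ) < Q)]
  set x : ℚ := ((i - 1) * (Q - 1)) / (P - 1) with hx
  refine Int.ceil_le.2 ?_
  rw [broomF, ← hx, div_le_iff₀ hQ']
  push_cast
  calc ((⌊x⌋ : ℚ) + 1 - 1) * (P - 1) = ⌊x⌋ * (P - 1) := by ring
    _ ≤ x * (P - 1) := mul_le_mul_of_nonneg_right (Int.floor_le x) hP'.le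
    _ = (i - 1) * (Q - 1) := div_mul_cancel₀ _ hP'.ne'

end BroomIndices

theorem Fin.exists_val_add_one_eq {n : ℕ} {a : ℤ} (h₁ : 1 ≤ a) (h₂ : a ≤ n) :
    ∃ k : Fin n, (k : ℤ) + 1 = a :=
  ⟨⟨(a - 1).toNat, by omega⟩, by simp only [Int.ofNat_toNat]; omega⟩

namespace BroomGraph

variable {p q : ℕ}

theorem adj_inl_inr {i : Fin p} {j : Fin q} :
    (broomGraph p q).Adj (.inl i) (.inr j) ↔ broomEdge p q (i + 1) (j + 1) := by
  constructor
  · rintro ⟨i', j', ⟨hi, hj⟩ | ⟨hj, -⟩, he⟩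
    · cases Sum.inl.inj hi
      cases Sum.inr.inj hj
      exact he
    · cases hj
  · exact fun he => ⟨i, j, .inl ⟨rfl, rfl⟩, he⟩

theorem exists_adj_broomF (hp : 1 < p) (hq : 1 ≤ q) (i : Fin p) :
    ∃ j : Fin q, (j : ℤ) + 1 = broomF p q (i + 1) ∧ (broomGraph p q).Adj (.inl i) (.inr j) := by
  have hi := i.isLt
  obtain ⟨j, hj⟩ := Fin.exists_val_add_one_eq (n := q)
    (one_le_broomF (P := p) (Q := q) (i := i + 1) (by omega) (by omega) (by omega))
    (broomF_le (by omega) (by omega) (by omega))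
  exact ⟨j, hj, adj_inl_inr.2 (.inl ⟨by omega, by omega, hj⟩)⟩

theorem exists_adj_broomG (hp : 1 < p) (hq : 1 < q) (j : Fin q) (hj : (j : ℕ) ≠ 0) :
    ∃ i : Fin p, (i : ℤ) + 1 = broomG p q (j + 1) ∧ (broomGraph p q).Adj (.inl i) (.inr j) := by
  have hj' := j.isLt
  obtain ⟨i, hi⟩ := Fin.exists_val_add_one_eq (n := p)
    (one_le_broomG (P := p) (Q := q) (j := j + 1) (by omega) (by omega) (by omega))
    (broomG_le (by omega) (by omega) (by omega))
  exact ⟨i, hi, adj_inl_inr.2 (.inr ⟨by omega, by omega, hi⟩)⟩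

theorem reachable_inl (hp : 1 < p) (hq : 1 < q) (i : Fin p) :
    (broomGraph p q).Reachable (.inr ⟨0, Nat.zero_lt_of_lt hq⟩) (.inl i) := by
  induction i using WellFoundedLT.induction with
  | ind i ih =>
    obtain ⟨j, hjF, hij⟩ := exists_adj_broomF hp hq.le i
    by_cases hj : (j : ℕ) = 0
    · obtain rfl : j = ⟨0, Nat.zero_lt_of_lt hq⟩ := Fin.ext hj
      exact hij.symm.reachable
    · obtain ⟨k, hkG, hkj⟩ := exists_adj_broomG hp hq j hj
      have hki : k < i := by
        have := broomG_broomF_le (P := p) (Q := q) (i := i + 1) (by omega) (by omega)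
        rw [← hjF, ← hkG] at this
        rw [Fin.lt_def]
        omega
      exact (ih k hki).trans (hkj.reachable.trans hij.symm.reachable)

theorem reachable_inr (hp : 1 < p) (hq : 1 < q) (j : Fin q) :
    (broomGraph p q).Reachable (.inr ⟨0, Nat.zero_lt_of_lt hq⟩) (.inr j) := by
  by_cases hj : (j : ℕ) = 0
  · obtain rfl : j = ⟨0, Nat.zero_lt_of_lt hq⟩ := Fin.ext hj
    rfl
  · obtain ⟨i, -, hij⟩ := exists_adj_broomG hp hq j hj
    exact (reachable_inl hp hq i).trans hij.reachable

end BroomGraph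

/-- the `(p,q)`-broom graph is connected. -/
theorem broomGraph_connected (p q : ℕ) (hp : 2 ≤ p) (hq : 2 ≤ q) :
    (broomGraph p q).Connected := by
  rw [SimpleGraph.connected_iff_exists_forall_reachable]
  refine ⟨.inr ⟨0, by omega⟩, ?_⟩
  rintro (i | j)
  · exact BroomGraph.reachable_inl hp hq i
  · exact BroomGraph.reachable_inr hp hq j
end

section
/- Let p, q be integers with p ≥ 2 and q ≥ 2, and let G be the simple graph on the vertex type Fin p ⊕ Fin q in which u_i is adjacent to v_j if and only if the pair (i, j) belongs to the (p,q)-broom edge set E', and no two left vertices and no two right vertices are adjacent. Then G is a tree (i.e., G is connected and acyclic); in particular it has p + q vertices and p + q − 1 edges. -/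
namespace SimpleGraph

variable {V α : Type*} [LinearOrder α] {G : SimpleGraph V} {rank : V → α} {r : V}

theorem reachable_of_forall_exists_adj_lt [Finite V]
    (hlower : ∀ x ≠ r, ∃ y, G.Adj x y ∧ rank y < rank x) (x : V) : G.Reachable x r := by
  induction x using (Finite.wellFounded_of_trans_of_irrefl (InvImage (· < ·) rank)).induction with
  | _ x ih =>
    by_cases hx : x = r
    · exact hx ▸ .refl _
    · obtain ⟨y, hxy, hy⟩ := hlower x hx
      exact hxy.reachable.trans (ih y hy)

theorem nat_card_edgeSet_add_one_of_forall_existsUnique_adj_lt [Finite V]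
    (hr : ∀ x, rank r ≤ rank x) (hne : ∀ x y, G.Adj x y → rank x ≠ rank y)
    (hlower : ∀ x ≠ r, ∃! y, G.Adj x y ∧ rank y < rank x) :
    Nat.card G.edgeSet + 1 = Nat.card V := by
  choose! parent hparent using fun x hx => (hlower x hx).exists
  have ne_root {x y} (hlt : rank y < rank x) : x ≠ r :=
    fun h => ((hr y).trans_lt (h ▸ hlt)).false
  have eq_parent {x y} (hxy : G.Adj x y) (hlt : rank y < rank x) : s(x, y) = s(x, parent x) := by
    rw [(hlower x (ne_root hlt)).unique ⟨hxy, hlt⟩ (hparent x (ne_root hlt))]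
  let e : {x // x ≠ r} → G.edgeSet := fun x => ⟨s(x, parent x), (hparent x x.2).1⟩
  have he : Function.Bijective e := by
    constructor
    · rintro ⟨x, hx⟩ ⟨y, hy⟩ hxy
      rcases Sym2.eq_iff.mp (Subtype.ext_iff.mp hxy) with ⟨rfl, -⟩ | ⟨hxy, hyx⟩
      · rfl
      · have := calc rank y = rank (parent x) := congrArg rank hyx.symm
          _ < rank x := (hparent x hx).2
          _ = rank (parent y) := congrArg rank hxy
          _ < rank y := (hparent y hy).2
        exact absurd this (lt_irrefl _)
    · rintro ⟨e, he⟩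
      induction e using Sym2.ind with
      | _ x y =>
        rcases (hne x y he).lt_or_gt with hlt | hlt
        · exact ⟨⟨y, ne_root hlt⟩,
            Subtype.ext (Sym2.eq_swap.trans (eq_parent he.symm hlt)).symm⟩
        · exact ⟨⟨x, ne_root hlt⟩, Subtype.ext (eq_parent he hlt).symm⟩
  have := Fintype.ofFinite V
  have : Nonempty V := ⟨r⟩
  classical
  rw [← Nat.card_eq_of_bijective e he, Nat.card_eq_fintype_card, Nat.card_eq_fintype_card,
    Fintype.card_subtype_compl, Fintype.card_subtype_eq, Nat.sub_add_cancel Fintype.card_pos]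

theorem isTree_of_forall_existsUnique_adj_lt [Finite V]
    (hr : ∀ x, rank r ≤ rank x) (hne : ∀ x y, G.Adj x y → rank x ≠ rank y)
    (hlower : ∀ x ≠ r, ∃! y, G.Adj x y ∧ rank y < rank x) : G.IsTree := by
  have hreach := reachable_of_forall_exists_adj_lt fun x hx => (hlower x hx).exists
  have : Nonempty V := ⟨r⟩
  exact isTree_iff_connected_and_card.mpr ⟨.mk fun x y => (hreach x).trans (hreach y).symm,
    nat_card_edgeSet_add_one_of_forall_existsUnique_adj_lt hr hne hlower⟩

end SimpleGraph

section broomArith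

variable {p q i j k : ℤ}

theorem le_broomF_sub_one_iff (hp : 1 < p) :
    k ≤ broomF p q i - 1 ↔ k * (p - 1) ≤ (i - 1) * (q - 1) := by
  have hp' : (0 : ℚ) < p - 1 := by rw [sub_pos]; exact_mod_cast hp
  rw [broomF, add_sub_cancel_right, Int.le_floor, le_div_iff₀ hp']
  exact_mod_cast Iff.rfl

theorem broomG_le_iff (hq : 1 < q) :
    broomG p q j ≤ k ↔ (j - 1) * (p - 1) ≤ k * (q - 1) := by
  have hq' : (0 : ℚ) < q - 1 := by rw [sub_pos]; exact_mod_cast hq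
  rw [broomG, Int.ceil_le, div_le_iff₀ hq']
  exact_mod_cast Iff.rfl

theorem broomF_sub_one_mul_le (hp : 1 < p) :
    (broomF p q i - 1) * (p - 1) ≤ (i - 1) * (q - 1) :=
  (le_broomF_sub_one_iff hp).mp le_rfl

theorem lt_broomG_sub_one_mul (hq : 1 < q) :
    (broomG p q j - 1) * (q - 1) < (j - 1) * (p - 1) :=
  lt_of_not_ge fun h => (broomG_le_iff hq).mpr h |>.not_gt (sub_one_lt _)

theorem broomF_mem_Icc (hp : 1 < p) (hq : 1 ≤ q) (hi : i ∈ Set.Icc 1 p) :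
    broomF p q i ∈ Set.Icc 1 q := by
  obtain ⟨hi1, hip⟩ := hi
  have hF := broomF_sub_one_mul_le (q := q) (i := i) hp
  have h0 := (le_broomF_sub_one_iff (q := q) (i := i) (k := 0) hp).mpr (by nlinarith)
  refine ⟨by omega, ?_⟩
  have : (broomF p q i - 1) * (p - 1) ≤ (q - 1) * (p - 1) := by nlinarith
  have := le_of_mul_le_mul_right this (by omega)
  omega

theorem broomG_mem_Icc (hp : 1 < p) (hj : j ∈ Set.Icc 2 q) :
    broomG p q j ∈ Set.Icc 1 p := by
  obtain ⟨hj2, hjq⟩ := hj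
  constructor
  · by_contra! h
    have := (broomG_le_iff (p := p) (q := q) (j := j) (k := 0) (by omega)).mp (by omega)
    nlinarith
  · exact (broomG_le_iff (by omega)).mpr (by nlinarith)

theorem broomEdge_and_le_iff (hp : 1 < p) (hi : i ∈ Set.Icc 1 p) :
    broomEdge p q i j ∧ (j - 1) * (p - 1) ≤ (i - 1) * (q - 1) ↔ j = broomF p q i := by
  constructor
  · rintro ⟨⟨-, -, hj⟩ | ⟨hj2, hjq, rfl⟩, hle⟩
    · exact hj
    · exact absurd hle (lt_broomG_sub_one_mul (by omega)).not_ge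
  · rintro rfl
    exact ⟨.inl ⟨hi.1, hi.2, rfl⟩, broomF_sub_one_mul_le hp⟩

theorem broomEdge_and_lt_iff (hp : 1 < p) :
    broomEdge p q i j ∧ (i - 1) * (q - 1) < (j - 1) * (p - 1) ↔
      j ∈ Set.Icc 2 q ∧ i = broomG p q j := by
  constructor
  · rintro ⟨⟨-, -, rfl⟩ | ⟨hj2, hjq, hi⟩, hlt⟩
    · exact absurd hlt (broomF_sub_one_mul_le hp).not_gt
    · exact ⟨⟨hj2, hjq⟩, hi⟩
  · rintro ⟨⟨hj2, hjq⟩, rfl⟩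
    exact ⟨.inr ⟨hj2, hjq, rfl⟩, lt_broomG_sub_one_mul (by omega)⟩

end broomArith

section broomGraph

variable {p q : ℕ}

theorem broomGraph_adj_inl_inr {i : Fin p} {j : Fin q} :
    (broomGraph p q).Adj (.inl i) (.inr j) ↔ broomEdge p q (i + 1) (j + 1) := by
  simp [broomGraph]

theorem broomGraph_not_adj_inl_inl {i i' : Fin p} : ¬(broomGraph p q).Adj (.inl i) (.inl i') := by
  simp [broomGraph]

theorem broomGraph_not_adj_inr_inr {j j' : Fin q} : ¬(broomGraph p q).Adj (.inr j) (.inr j') := by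
  simp [broomGraph]

/-- `2 (p - 1) (q - 1)` times the positions of the vertices; the `+ 1` puts `u_{i+1}` just after
a `v` at the same position. -/
def broomRank (p q : ℕ) : Fin p ⊕ Fin q → ℤ :=
  Sum.elim (fun i => 2 * (i * (q - 1)) + 1) (fun j => 2 * (j * (p - 1)))

theorem broomRank_root_le (hp : 0 < p) (hq : 0 < q) (x : Fin p ⊕ Fin q) :
    broomRank p q (.inr ⟨0, hq⟩) ≤ broomRank p q x := by
  have hp' : (0 : ℤ) ≤ p - 1 := by omega
  have hq' : (0 : ℤ) ≤ q - 1 := by omega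
  rcases x with i | j <;>
    simp only [broomRank, Sum.elim_inl, Sum.elim_inr, Nat.cast_zero, zero_mul, mul_zero]
  · have := mul_nonneg (Nat.cast_nonneg (α := ℤ) i) hq'
    omega
  · have := mul_nonneg (Nat.cast_nonneg (α := ℤ) j) hp'
    omega

theorem broomRank_ne_of_adj {x y : Fin p ⊕ Fin q} (h : (broomGraph p q).Adj x y) :
    broomRank p q x ≠ broomRank p q y := by
  rcases x with i | j <;> rcases y with i' | j'
  · exact absurd h broomGraph_not_adj_inl_inl
  · simp only [broomRank, Sum.elim_inl, Sum.elim_inr]; omega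
  · simp only [broomRank, Sum.elim_inl, Sum.elim_inr]; omega
  · exact absurd h broomGraph_not_adj_inr_inr

theorem broomGraph_adj_inl_and_rank_lt_iff (hp : 2 ≤ p) {i : Fin p} {j : Fin q} :
    (broomGraph p q).Adj (.inl i) (.inr j) ∧ broomRank p q (.inr j) < broomRank p q (.inl i) ↔
      (j : ℤ) + 1 = broomF p q (i + 1) := by
  rw [broomGraph_adj_inl_inr, ← broomEdge_and_le_iff (by omega) ⟨by omega, by omega⟩]
  simp only [broomRank, Sum.elim_inl, Sum.elim_inr, add_sub_cancel_right]
  exact and_congr_right fun _ => by omega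

theorem broomGraph_adj_inr_and_rank_lt_iff (hp : 2 ≤ p) {i : Fin p} {j : Fin q} :
    (broomGraph p q).Adj (.inr j) (.inl i) ∧ broomRank p q (.inl i) < broomRank p q (.inr j) ↔
      0 < (j : ℕ) ∧ (i : ℤ) + 1 = broomG p q (j + 1) := by
  have hrank : broomRank p q (.inl i) < broomRank p q (.inr j) ↔
      ((i : ℤ) + 1 - 1) * (q - 1) < ((j : ℤ) + 1 - 1) * (p - 1) := by
    simp only [broomRank, Sum.elim_inl, Sum.elim_inr, add_sub_cancel_right]
    omega
  rw [SimpleGraph.adj_comm, broomGraph_adj_inl_inr, hrank, broomEdge_and_lt_iff (by omega),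
    Set.mem_Icc]
  exact and_congr_left fun _ => by omega

theorem broomGraph_existsUnique_adj_inl_rank_lt (hp : 2 ≤ p) (hq : 0 < q) (i : Fin p) :
    ∃! y, (broomGraph p q).Adj (.inl i) y ∧ broomRank p q y < broomRank p q (.inl i) := by
  obtain ⟨hF1, hFq⟩ := broomF_mem_Icc (p := p) (q := q) (i := i + 1) (by omega) (by omega)
    ⟨by omega, by omega⟩
  refine ⟨.inr ⟨(broomF p q (i + 1) - 1).toNat, by omega⟩,
    (broomGraph_adj_inl_and_rank_lt_iff hp).mpr (by simp only; omega), ?_⟩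
  rintro (i' | j) h
  · exact absurd h.1 broomGraph_not_adj_inl_inl
  · have := (broomGraph_adj_inl_and_rank_lt_iff hp).mp h
    exact congrArg Sum.inr (Fin.ext (by simp only; omega))

theorem broomGraph_existsUnique_adj_inr_rank_lt (hp : 2 ≤ p) {j : Fin q} (hj : 0 < (j : ℕ)) :
    ∃! y, (broomGraph p q).Adj (.inr j) y ∧ broomRank p q y < broomRank p q (.inr j) := by
  obtain ⟨hG1, hGp⟩ := broomG_mem_Icc (p := p) (q := q) (j := j + 1) (by omega)
    ⟨by omega, by omega⟩
  refine ⟨.inl ⟨(broomG p q (j + 1) - 1).toNat, by omega⟩,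
    (broomGraph_adj_inr_and_rank_lt_iff hp).mpr ⟨hj, by simp only; omega⟩, ?_⟩
  rintro (i | j') h
  · have := (broomGraph_adj_inr_and_rank_lt_iff hp).mp h
    exact congrArg Sum.inl (Fin.ext (by simp only; omega))
  · exact absurd h.1 broomGraph_not_adj_inr_inr

end broomGraph

/-- the `(p,q)`-broom graph is a tree; in particular it has `p + q`
vertices and `p + q - 1` edges. -/
theorem broomGraph_isTree (p q : ℕ) (hp : 2 ≤ p) (hq : 2 ≤ q) :
    (broomGraph p q).IsTree ∧ Fintype.card (Fin p ⊕ Fin q) = p + q ∧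
      (broomGraph p q).edgeSet.ncard = p + q - 1 := by
  have hq0 : 0 < q := by omega
  have hlower : ∀ x ≠ .inr ⟨0, hq0⟩,
      ∃! y, (broomGraph p q).Adj x y ∧ broomRank p q y < broomRank p q x := by
    rintro (i | j) hx
    · exact broomGraph_existsUnique_adj_inl_rank_lt hp hq0 i
    · exact broomGraph_existsUnique_adj_inr_rank_lt hp
        (Nat.pos_of_ne_zero fun h => hx (congrArg Sum.inr (Fin.ext h)))
  have htree := SimpleGraph.isTree_of_forall_existsUnique_adj_lt
    (broomRank_root_le (by omega) hq0) (fun _ _ => broomRank_ne_of_adj) hlower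
  have hcard := (SimpleGraph.isTree_iff_connected_and_card.mp htree).2
  simp only [Nat.card_coe_set_eq, Nat.card_sum, Nat.card_eq_fintype_card (α := Fin _),
    Fintype.card_fin] at hcard
  exact ⟨htree, by simp, by omega⟩
end

section
/- Let p, q be integers with p ≥ 2 and q ≥ 2, and let E' ⊆ {1,…,p} × {1,…,q} be the (p,q)-broom edge set, ordered by the lexicographic order on pairs (first by the left index, then by the right index). Then any two edges that are consecutive in this order share an endpoint: if e = (i, j) and e' = (i', j') are both in E', e < e' lexicographically, and no element of E' lies strictly between them, then i = i' or j = j'. -/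
/-- The `(p,q)`-broom edge set, as a set of index pairs in `{1,…,p} × {1,…,q}`. -/
def broomEdges (p q : ℤ) : Set (ℤ × ℤ) :=
  {e | (1 ≤ e.1 ∧ e.1 ≤ p ∧ e.2 = broomF p q e.1) ∨
       (2 ≤ e.2 ∧ e.2 ≤ q ∧ e.1 = broomG p q e.2)}

/-- The lexicographic (strict) order on pairs: first coordinates compared first,
ties broken by second coordinates. -/
def lexLt (e e' : ℤ × ℤ) : Prop :=
  e.1 < e'.1 ∨ (e.1 = e'.1 ∧ e.2 < e'.2)


/-!
With `P = p - 1` and `Q = q - 1`, both `g j < i` and `j ≤ f i` say `(j - 1) P ≤ (i - 1) Q`, so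
`f` and `g` form a Galois connection. It follows that `u_i` is adjacent exactly to the `v_j` with
`f i ≤ j ≤ min (f (i + 1)) q`: the broom is a monotone staircase whose rows are intervals, each
row starting in the column where the previous one ends. Walking through a staircase in
lexicographic order, every step either moves right within a row or drops from the end of a row
to the start of the next one, which lies in the same column.
-/

def staircase (p q : ℤ) (F : ℤ → ℤ) : Set (ℤ × ℤ) :=
  {e | 1 ≤ e.1 ∧ e.1 ≤ p ∧ F e.1 ≤ e.2 ∧ e.2 ≤ F (e.1 + 1) ∧ e.2 ≤ q}

theorem staircase_consecutive_share_endpoint {p q : ℤ} {F : ℤ → ℤ} (hF : Monotone F)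
    (hFp : F p ≤ q) {e e' : ℤ × ℤ} (he : e ∈ staircase p q F) (he' : e' ∈ staircase p q F)
    (hlt : lexLt e e') (hbetween : ∀ e'' ∈ staircase p q F, ¬ (lexLt e e'' ∧ lexLt e'' e')) :
    e.1 = e'.1 ∨ e.2 = e'.2 := by
  obtain ⟨i, j⟩ := e
  obtain ⟨i', j'⟩ := e'
  obtain ⟨hi1, hip, hFj, hjF, -⟩ := he
  obtain ⟨-, hip', hFj', -, hjq'⟩ := he'
  dsimp only at hi1 hip hFj hjF hip' hFj' hjq'
  dsimp only [lexLt] at hlt ⊢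
  by_cases hii : i = i'
  · exact Or.inl hii
  right
  have hnext := hbetween (i + 1, F (i + 1))
    ⟨by omega, by omega, le_rfl, hF (by omega), (hF (by omega)).trans hFp⟩
  dsimp only [lexLt] at hnext
  obtain rfl : i' = i + 1 := by omega
  obtain rfl : j' = F (i + 1) := by omega
  have hright := fun h : j + 1 ≤ F (i + 1) ↦
    hbetween (i, j + 1) ⟨hi1, hip, hFj.trans (lt_add_one j).le, h, h.trans hjq'⟩
  dsimp only [lexLt] at hright
  omega

section Broom

variable {p q : ℤ}

theorem broomG_lt_iff_le_broomF (hp : 1 < p) (hq : 1 < q) (i j : ℤ) :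
    broomG p q j < i ↔ j ≤ broomF p q i := by
  have hP : (0 : ℚ) < p - 1 := by rw [sub_pos]; exact_mod_cast hp
  have hQ : (0 : ℚ) < q - 1 := by rw [sub_pos]; exact_mod_cast hq
  calc broomG p q j < i ↔ broomG p q j ≤ i - 1 := Order.le_sub_one_iff.symm
    _ ↔ ((j : ℚ) - 1) * (p - 1) ≤ (i - 1) * (q - 1) := by
      rw [broomG, Int.ceil_le, div_le_iff₀ hQ]; push_cast; rfl
    _ ↔ ((j - 1 : ℤ) : ℚ) ≤ (i - 1) * (q - 1) / (p - 1) := by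
      rw [le_div_iff₀ hP]; push_cast; rfl
    _ ↔ j ≤ broomF p q i := by rw [broomF, ← Int.le_floor]; omega

theorem broomF_monotone (hp : 1 < p) (hq : 1 < q) : Monotone (broomF p q) := fun _ _ h ↦
  (broomG_lt_iff_le_broomF hp hq _ _).mp
    (((broomG_lt_iff_le_broomF hp hq _ _).mpr le_rfl).trans_le h)

theorem broomF_one : broomF p q 1 = 1 := by simp [broomF]

theorem broomF_self (hp : 1 < p) : broomF p q p = q := by
  have hP : (p : ℚ) - 1 ≠ 0 := by rw [sub_ne_zero]; exact_mod_cast hp.ne'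
  rw [broomF, mul_div_cancel_left₀ _ hP, ← Int.cast_one, ← Int.cast_sub, Int.floor_intCast]
  omega

theorem broomEdges_eq_staircase (hp : 1 < p) (hq : 1 < q) :
    broomEdges p q = staircase p q (broomF p q) := by
  have gc := broomG_lt_iff_le_broomF hp hq
  have hmono := broomF_monotone hp hq
  ext ⟨i, j⟩
  simp only [broomEdges, staircase, Set.mem_ofPred_eq]
  constructor
  · rintro (⟨hi1, hip, rfl⟩ | ⟨hj2, hjq, rfl⟩)
    · exact ⟨hi1, hip, le_rfl, hmono (by omega), (hmono hip).trans_eq (broomF_self hp)⟩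
    · have hg1 : 1 ≤ broomG p q j := by
        rw [← not_lt, gc, broomF_one]
        omega
      have hgp : broomG p q j < p := (gc p j).mpr (broomF_self hp ▸ hjq)
      have hfg : broomF p q (broomG p q j) < j := by
        rw [← not_le, ← gc]
        exact lt_irrefl _
      exact ⟨hg1, hgp.le, hfg.le, (gc _ j).mp (lt_add_one _), hjq⟩
  · rintro ⟨hi1, hip, hFj, hjF, hjq⟩
    rcases hFj.eq_or_lt with rfl | hFj
    · exact Or.inl ⟨hi1, hip, rfl⟩
    · have hf1 : 1 ≤ broomF p q i := broomF_one (p := p) (q := q) ▸ hmono hi1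
      have hlt : broomG p q j < i + 1 := (gc _ j).mpr hjF
      have hge : ¬ broomG p q j < i := by rw [gc]; omega
      exact Or.inr ⟨by omega, hjq, by omega⟩

end Broom

/-- two broom edges that are consecutive in the lexicographic order
share an endpoint. -/
theorem broom_consecutive_share_endpoint (p q : ℤ) (hp : 2 ≤ p) (hq : 2 ≤ q)
    (e e' : ℤ × ℤ) (he : e ∈ broomEdges p q) (he' : e' ∈ broomEdges p q)
    (hlt : lexLt e e')
    (hbetween : ∀ e'' ∈ broomEdges p q, ¬ (lexLt e e'' ∧ lexLt e'' e')) :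
    e.1 = e'.1 ∨ e.2 = e'.2 := by
  rw [broomEdges_eq_staircase hp hq] at he he' hbetween
  exact staircase_consecutive_share_endpoint (broomF_monotone hp hq) (broomF_self hp).le
    he he' hlt hbetween
end

section
/- Let (Ω, 𝒜, ℙ) be a probability space, let n be a positive integer, and let X_1, …, X_n be independent real-valued random variables with 0 ≤ X_i ≤ M almost surely for a constant M > 0. Set X = X_1 + ⋯ + X_n. Then for every ε > 0, ℙ(X ≤ (1 − ε)·𝔼[X]) ≤ exp(−2ε²·(𝔼[X])² / (n·M²)). -/
open MeasureTheory ProbabilityTheory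

/-!
By Hoeffding's lemma each centred variable `𝔼[Xᵢ] - Xᵢ` is sub-Gaussian with variance proxy
`M² / 4`; by independence these proxies add up along the sum, and the Chernoff bound for a
sub-Gaussian variable gives `ℙ(𝔼[X] - X ≥ t) ≤ exp(-2t² / (n M²))`. Take `t = ε 𝔼[X]`.
-/

lemma measureReal_sum_le_sum_integral_sub_le {Ω ι : Type*} [MeasurableSpace Ω] {μ : Measure Ω}
    {X : ι → Ω → ℝ} (h_indep : iIndepFun X μ) (h_meas : ∀ i, AEMeasurable (X i) μ)
    {a b : ι → ℝ} {s : Finset ι} (h_bound : ∀ i ∈ s, ∀ᵐ ω ∂μ, X i ω ∈ Set.Icc (a i) (b i))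
    {t : ℝ} (ht : 0 ≤ t) :
    μ.real {ω | ∑ i ∈ s, X i ω ≤ ∑ i ∈ s, μ[X i] - t} ≤
      Real.exp (-2 * t ^ 2 / ∑ i ∈ s, (b i - a i) ^ 2) := by
  have := h_indep.isProbabilityMeasure
  have h_indep' : iIndepFun (fun i ω ↦ μ[X i] - X i ω) μ :=
    h_indep.comp (fun i x ↦ ∫ ω, X i ω ∂μ - x) fun _ ↦ by fun_prop
  have h_subG : ∀ i ∈ s,
      HasSubgaussianMGF (fun ω ↦ μ[X i] - X i ω) ((‖b i - a i‖₊ / 2) ^ 2) μ := fun i hi ↦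
    (hasSubgaussianMGF_of_mem_Icc (h_meas i) (h_bound i hi)).neg.congr <|
      ae_of_all _ fun ω ↦ by simp
  calc μ.real {ω | ∑ i ∈ s, X i ω ≤ ∑ i ∈ s, μ[X i] - t}
      = μ.real {ω | t ≤ ∑ i ∈ s, (μ[X i] - X i ω)} := by
        simp only [Finset.sum_sub_distrib, le_sub_comm]
    _ ≤ Real.exp (-t ^ 2 / (2 * ∑ i ∈ s, ((‖b i - a i‖₊ / 2) ^ 2 : NNReal))) :=
        HasSubgaussianMGF.measure_sum_ge_le_of_iIndepFun h_indep' h_subG ht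
    _ = Real.exp (-2 * t ^ 2 / ∑ i ∈ s, (b i - a i) ^ 2) := by
        push_cast
        simp only [Real.norm_eq_abs, div_pow, sq_abs, ← Finset.sum_div]
        congr 1
        ring

theorem hoeffding_lower_tail_general
    {Ω : Type*} [MeasurableSpace Ω] (μ : Measure Ω) [IsProbabilityMeasure μ]
    (n : ℕ) (M : ℝ) (X : Fin n → Ω → ℝ)
    (hmeas : ∀ i, Measurable (X i))
    (hindep : iIndepFun X μ)
    (hbound : ∀ i, ∀ᵐ ω ∂μ, X i ω ∈ Set.Icc 0 M)
    (ε : ℝ) (hε : 0 < ε) :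
    (μ {ω | ∑ i, X i ω ≤ (1 - ε) * (∫ ω', (∑ i, X i ω') ∂μ)}).toReal ≤
      Real.exp (-(2 * ε ^ 2 * (∫ ω', (∑ i, X i ω') ∂μ) ^ 2) / (n * M ^ 2)) := by
  set m := ∫ ω', (∑ i, X i ω') ∂μ
  have hm : m = ∑ i, μ[X i] :=
    integral_finsetSum _ fun i _ ↦ .of_mem_Icc 0 M (hmeas i).aemeasurable (hbound i)
  have hm_nonneg : 0 ≤ m := integral_nonneg_of_ae <| (ae_all_iff.2 hbound).mono
    fun ω hω ↦ Finset.sum_nonneg fun i _ ↦ (hω i).1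
  rw [show (1 - ε) * m = ∑ i, μ[X i] - ε * m by rw [← hm]; ring]
  refine (measureReal_sum_le_sum_integral_sub_le hindep (fun i ↦ (hmeas i).aemeasurable)
    (s := .univ) (fun i _ ↦ hbound i) (mul_nonneg hε.le hm_nonneg)).trans_eq ?_
  simp only [sub_zero, Finset.sum_const, Finset.card_univ, Fintype.card_fin, nsmul_eq_mul]
  congr 1
  ring

/-- lower-tail Hoeffding inequality, relative-deviation form:
for independent random variables `X i ∈ [0, M]` a.s. with sum `X`, and every `ε > 0`,
`ℙ(X ≤ (1−ε)·𝔼[X]) ≤ exp(−2ε²·𝔼[X]² / (n·M²))`. -/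
theorem hoeffding_lower_tail
    {Ω : Type*} [MeasurableSpace Ω] (μ : Measure Ω) [IsProbabilityMeasure μ]
    (n : ℕ) (hn : 0 < n) (M : ℝ) (hM : 0 < M) (X : Fin n → Ω → ℝ)
    (hmeas : ∀ i, Measurable (X i))
    (hindep : iIndepFun X μ)
    (hint : ∀ i, Integrable (X i) μ)
    (hbound : ∀ i, ∀ᵐ ω ∂μ, X i ω ∈ Set.Icc 0 M)
    (ε : ℝ) (hε : 0 < ε) :
    (μ {ω | ∑ i, X i ω ≤ (1 - ε) * (∫ ω', (∑ i, X i ω') ∂μ)}).toReal ≤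
      Real.exp (-(2 * ε ^ 2 * (∫ ω', (∑ i, X i ω') ∂μ) ^ 2) / (n * M ^ 2)) :=
  hoeffding_lower_tail_general μ n M X hmeas hindep hbound ε hε
end

section
/- Let U and V be finite types with a bipartite adjacency relation r : U → V → Prop, let p, q ≥ 2 be integers, and let cU : U → ℕ and cV : V → ℕ be colorings such that for every (p,q)-biclique (A, B), the coloring cU is injective on A and cV is injective on B. Define a color-ordered (p,q)-broom as a pair of injections σ : Fin p → U and τ : Fin q → V such that cU ∘ σ is strictly increasing, cV ∘ τ is strictly increasing, and r(σ(i), τ(j)) holds for every pair (i, j) in the (p,q)-broom edge set E'. Then the number of (p,q)-bicliques in (U, V, r) is at most the number of color-ordered (p,q)-brooms. -/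
lemma exists_mono_enum {U : Type*} [DecidableEq U] (c : U → ℕ) {p : ℕ} (A : Finset U)
    (hA : A.card = p) (hp : 0 < p) (hinj : Set.InjOn c (A : Set U)) :
    ∃ σ : Fin p → U, StrictMono (c ∘ σ) ∧ Finset.image σ Finset.univ = A := by
  classical
  have hAne : A.Nonempty := Finset.card_pos.mp (hA ▸ hp)
  haveI : Nonempty U := ⟨hAne.choose⟩
  set C : Finset ℕ := A.image c with hC
  have hCcard : C.card = p := by rw [hC, Finset.card_image_of_injOn hinj, hA]
  let e := C.orderEmbOfFin hCcard
  let σ : Fin p → U := fun i => Function.invFunOn c (A : Set U) (e i)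
  have hmemim : ∀ i, e i ∈ c '' (A : Set U) := by
    intro i
    have h1 : e i ∈ C := C.orderEmbOfFin_mem hCcard i
    obtain ⟨a, ha, hae⟩ := Finset.mem_image.mp h1
    exact ⟨a, ha, hae⟩
  have hceq : ∀ i, c (σ i) = e i := fun i => Function.invFunOn_eq (by
    obtain ⟨a, ha, hae⟩ := hmemim i
    exact ⟨a, ha, hae⟩)
  have hmem : ∀ i, σ i ∈ A := fun i =>
    Function.invFunOn_mem (by obtain ⟨a, ha, hae⟩ := hmemim i; exact ⟨a, ha, hae⟩)
  have hsm : StrictMono (c ∘ σ) := by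
    intro i j hij
    simp only [Function.comp_apply, hceq]
    exact (C.orderEmbOfFin hCcard).strictMono hij
  refine ⟨σ, hsm, ?_⟩
  have hsub : Finset.image σ Finset.univ ⊆ A := by
    intro x hx
    obtain ⟨i, _, rfl⟩ := Finset.mem_image.mp hx
    exact hmem i
  refine Finset.eq_of_subset_of_card_le hsub ?_
  have hinjσ : Function.Injective σ := fun i j h => hsm.injective (by simp [Function.comp, h])
  have : (Finset.image σ Finset.univ).card = p := by
    rw [Finset.card_image_of_injective _ hinjσ, Finset.card_univ, Fintype.card_fin]
  omega

/-- if on every `(p,q)`-biclique the colorings `cU`, `cV` are injective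
on the respective sides, then the number of `(p,q)`-bicliques is at most the number of
color-ordered `(p,q)`-brooms. -/
theorem biclique_count_le_colored_broom_count
    {U V : Type*} [Fintype U] [Fintype V] (r : U → V → Prop)
    (p q : ℕ) (hp : 2 ≤ p) (hq : 2 ≤ q)
    (cU : U → ℕ) (cV : V → ℕ)
    (hcol : ∀ (A : Finset U) (B : Finset V), A.card = p → B.card = q →
      (∀ a ∈ A, ∀ b ∈ B, r a b) → Set.InjOn cU (A : Set U) ∧ Set.InjOn cV (B : Set V)) :
    Nat.card {AB : Finset U × Finset V //
        AB.1.card = p ∧ AB.2.card = q ∧ ∀ a ∈ AB.1, ∀ b ∈ AB.2, r a b} ≤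
    Nat.card {στ : (Fin p → U) × (Fin q → V) //
        Function.Injective στ.1 ∧ Function.Injective στ.2 ∧
        StrictMono (cU ∘ στ.1) ∧ StrictMono (cV ∘ στ.2) ∧
        ∀ (i : Fin p) (j : Fin q),
          broomEdge (p : ℤ) (q : ℤ) ((i : ℤ) + 1) ((j : ℤ) + 1) →
            r (στ.1 i) (στ.2 j)} := by
  classical
  have key : ∀ x : {AB : Finset U × Finset V //
        AB.1.card = p ∧ AB.2.card = q ∧ ∀ a ∈ AB.1, ∀ b ∈ AB.2, r a b},
      ∃ στ : (Fin p → U) × (Fin q → V),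
        (Function.Injective στ.1 ∧ Function.Injective στ.2 ∧
        StrictMono (cU ∘ στ.1) ∧ StrictMono (cV ∘ στ.2) ∧
        ∀ (i : Fin p) (j : Fin q),
          broomEdge (p : ℤ) (q : ℤ) ((i : ℤ) + 1) ((j : ℤ) + 1) →
            r (στ.1 i) (στ.2 j)) ∧
        Finset.image στ.1 Finset.univ = x.1.1 ∧ Finset.image στ.2 Finset.univ = x.1.2 := by
    rintro ⟨⟨A, B⟩, hA, hB, hr⟩
    obtain ⟨hiU, hiV⟩ := hcol A B hA hB hr
    obtain ⟨σ, hσsm, hσim⟩ := exists_mono_enum cU A hA (by omega) hiU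
    obtain ⟨τ, hτsm, hτim⟩ := exists_mono_enum cV B hB (by omega) hiV
    have hσmem : ∀ i, σ i ∈ A := fun i => hσim ▸ Finset.mem_image_of_mem σ (Finset.mem_univ i)
    have hτmem : ∀ j, τ j ∈ B := fun j => hτim ▸ Finset.mem_image_of_mem τ (Finset.mem_univ j)
    exact ⟨(σ, τ),
      ⟨fun i j h => hσsm.injective (congrArg cU h),
       fun i j h => hτsm.injective (congrArg cV h),
       hσsm, hτsm, fun i j _ => hr _ (hσmem i) _ (hτmem j)⟩, hσim, hτim⟩
  choose Φ hΦ hΦ1 hΦ2 using key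
  refine Nat.card_le_card_of_injective (fun x => ⟨Φ x, hΦ x⟩) ?_
  intro x y hxy
  have h : Φ x = Φ y := congrArg Subtype.val hxy
  have h1 : x.1.1 = y.1.1 := by rw [← hΦ1 x, ← hΦ1 y, h]
  have h2 : x.1.2 = y.1.2 := by rw [← hΦ2 x, ← hΦ2 y, h]
  exact Subtype.ext (Prod.ext h1 h2)
end
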